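/- For n ≥ 4 and 0 < p_a < 1, the arc random digraph D(n,p_a) is not a vertex random digraph: there exist no probability space (Ω,μ) and measurable function φ : Ω × Ω → {0,1} such that for every digraph D on [n], p_a^{|A(D)|}(1−p_a)^{n(n−1)−|A(D)|} = ∫ ∏_{(i,j)∈A(D)} φ(x_i,x_j) · ∏_{(i,j)∉A(D), i≠j} (1 − φ(x_i,x_j)) dμⁿ(x). -/

import Mathlib

/-!
If `D(n, p_a)` were the vertex random digraph of a `{0,1}`-valued kernel `φ`, the arc indicators
`φ(x_i, x_j)` would have the joint moments of independent Bernoulli(`p_a`) variables, so for the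
centred kernel `ψ = φ - p_a` the moment of the four arcs `c → a, c → b, d → a, d → b` vanishes.
By Fubini this moment is `∫∫ K(u, v)² du dv` for the codegree function
`K(u, v) = ∫ ψ(t, u) ψ(t, v) dt`, hence `K = 0` a.e. Then `t ↦ ∫_B ψ(t, ·)` has vanishing square
integral `∫∫_{B×B} K` for every `B`, so `ψ` integrates to zero over every rectangle and `ψ = 0`
a.e. This is impossible, as `ψ` takes only the values `-p_a` and `1 - p_a`.
-/

open MeasureTheory Finset

/-- A finset of ordered pairs is (the arc set of) a digraph on `Fin n` if it has no loops. -/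
def IsDigraph {n : ℕ} (A : Finset (Fin n × Fin n)) : Prop := ∀ p ∈ A, p.1 ≠ p.2

/-- The probability that the vertex-arc random digraph `D(n, Ω, μ, φ)` equals the digraph
with arc set `A`. -/
noncomputable def vardP {Ω : Type*} [MeasurableSpace Ω] (μ : Measure Ω) {n : ℕ}
    (φ : Ω → Ω → ℝ) (A : Finset (Fin n × Fin n)) : ℝ :=
  ∫ x : Fin n → Ω,
    (∏ p ∈ A, φ (x p.1) (x p.2)) *
      ∏ p ∈ Finset.univ.filter (fun p : Fin n × Fin n => p.1 ≠ p.2 ∧ p ∉ A),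
        (1 - φ (x p.1) (x p.2)) ∂(Measure.pi fun _ : Fin n => μ)

open ProbabilityTheory

lemma Finset.prod_eq_sum_powerset_sdiff {ι R : Type*} [DecidableEq ι] [CommRing R]
    (f : ι → R) (s T : Finset ι) :
    ∏ i ∈ T, f i = ∑ t ∈ (s \ T).powerset, (∏ i ∈ T ∪ t, f i) * ∏ i ∈ s \ (T ∪ t), (1 - f i) := by
  calc ∏ i ∈ T, f i = (∏ i ∈ T, f i) * ∏ i ∈ s \ T, (f i + (1 - f i)) := by simp
    _ = _ := by
      rw [prod_add, mul_sum]
      refine sum_congr rfl fun t ht => ?_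
      have hdisj : Disjoint T t := disjoint_of_subset_right (mem_powerset.1 ht) disjoint_sdiff
      rw [prod_union hdisj, sdiff_sdiff_left, sup_eq_union, mul_assoc]

lemma vardP_eq_integral_offDiag {Ω : Type*} [MeasurableSpace Ω] (μ : Measure Ω) {n : ℕ}
    (φ : Ω → Ω → ℝ) (A : Finset (Fin n × Fin n)) :
    vardP μ φ A = ∫ x : Fin n → Ω, (∏ p ∈ A, φ (x p.1) (x p.2)) *
      ∏ p ∈ univ.offDiag \ A, (1 - φ (x p.1) (x p.2)) ∂(Measure.pi fun _ : Fin n => μ) := by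
  unfold vardP
  congr! 4 with x
  ext p
  simp [mem_offDiag]

section ArcMoments

variable {Ω : Type*} [MeasurableSpace Ω] {μ : Measure Ω} [IsFiniteMeasure μ]
  {n : ℕ} {φ : Ω → Ω → ℝ} {pa : ℝ}

lemma integrable_prod_arc_mul_prod_arc (hφm : Measurable (Function.uncurry φ))
    (hφ : ∀ x y, φ x y = 0 ∨ φ x y = 1) (A B : Finset (Fin n × Fin n)) :
    Integrable (fun x : Fin n → Ω =>
      (∏ p ∈ A, φ (x p.1) (x p.2)) * ∏ p ∈ B, (1 - φ (x p.1) (x p.2)))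
      (Measure.pi fun _ : Fin n => μ) := by
  have hφ_le : ∀ x y, ‖φ x y‖ ≤ 1 := fun x y => by rcases hφ x y with h | h <;> simp [h]
  have hφ_le' : ∀ x y, ‖1 - φ x y‖ ≤ 1 := fun x y => by rcases hφ x y with h | h <;> simp [h]
  refine Integrable.of_bound (by fun_prop) 1 (ae_of_all _ fun x => ?_)
  rw [norm_mul, norm_prod, norm_prod]
  exact mul_le_one₀ (prod_le_one (fun _ _ => norm_nonneg _) fun _ _ => hφ_le _ _)
    (prod_nonneg fun _ _ => norm_nonneg _)
    (prod_le_one (fun _ _ => norm_nonneg _) fun _ _ => hφ_le' _ _)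

lemma integral_prod_arc_eq_pow (hφm : Measurable (Function.uncurry φ))
    (hφ : ∀ x y, φ x y = 0 ∨ φ x y = 1)
    (h : ∀ A : Finset (Fin n × Fin n), IsDigraph A →
        pa ^ A.card * (1 - pa) ^ (n * (n - 1) - A.card) = vardP μ φ A)
    {T : Finset (Fin n × Fin n)} (hT : T ⊆ univ.offDiag) :
    ∫ x : Fin n → Ω, ∏ p ∈ T, φ (x p.1) (x p.2) ∂(Measure.pi fun _ : Fin n => μ) = pa ^ #T := by
  have hterm : ∀ t ∈ (univ.offDiag \ T).powerset,
      ∫ x : Fin n → Ω, (∏ p ∈ T ∪ t, φ (x p.1) (x p.2)) *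
        ∏ p ∈ univ.offDiag \ (T ∪ t), (1 - φ (x p.1) (x p.2)) ∂(Measure.pi fun _ : Fin n => μ)
      = (∏ _p ∈ T ∪ t, pa) * ∏ _p ∈ univ.offDiag \ (T ∪ t), (1 - pa) := by
    intro t ht
    have hsub : T ∪ t ⊆ univ.offDiag :=
      union_subset hT ((mem_powerset.1 ht).trans sdiff_subset)
    rw [← vardP_eq_integral_offDiag, ← h _ fun p hp => (mem_offDiag.1 (hsub hp)).2.2,
      prod_const, prod_const, card_sdiff_of_subset hsub, offDiag_card, card_univ,
      Fintype.card_fin, Nat.mul_sub_one]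
  calc ∫ x : Fin n → Ω, ∏ p ∈ T, φ (x p.1) (x p.2) ∂(Measure.pi fun _ : Fin n => μ)
      = ∑ t ∈ (univ.offDiag \ T).powerset, ∫ x : Fin n → Ω, (∏ p ∈ T ∪ t, φ (x p.1) (x p.2)) *
        ∏ p ∈ univ.offDiag \ (T ∪ t), (1 - φ (x p.1) (x p.2))
          ∂(Measure.pi fun _ : Fin n => μ) := by
        rw [← integral_finsetSum _ fun t _ => integrable_prod_arc_mul_prod_arc hφm hφ _ _]
        congr 1 with x
        exact prod_eq_sum_powerset_sdiff (fun p : Fin n × Fin n => φ (x p.1) (x p.2)) _ _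
    _ = ∑ t ∈ (univ.offDiag \ T).powerset,
          (∏ _p ∈ T ∪ t, pa) * ∏ _p ∈ univ.offDiag \ (T ∪ t), (1 - pa) := sum_congr rfl hterm
    _ = pa ^ #T := by rw [← prod_eq_sum_powerset_sdiff, prod_const]

lemma integral_prod_arc_sub_eq_zero (hφm : Measurable (Function.uncurry φ))
    (hφ : ∀ x y, φ x y = 0 ∨ φ x y = 1)
    (h : ∀ A : Finset (Fin n × Fin n), IsDigraph A →
        pa ^ A.card * (1 - pa) ^ (n * (n - 1) - A.card) = vardP μ φ A)
    {T : Finset (Fin n × Fin n)} (hT : T ⊆ univ.offDiag) (hTne : T.Nonempty) :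
    ∫ x : Fin n → Ω, ∏ p ∈ T, (φ (x p.1) (x p.2) - pa) ∂(Measure.pi fun _ : Fin n => μ) = 0 := by
  have hint : ∀ U ∈ T.powerset, Integrable (fun x : Fin n → Ω =>
      (∏ p ∈ U, φ (x p.1) (x p.2)) * ∏ _p ∈ T \ U, -pa) (Measure.pi fun _ : Fin n => μ) :=
    fun U _ => by simpa using (integrable_prod_arc_mul_prod_arc hφm hφ U ∅).mul_const _
  calc ∫ x : Fin n → Ω, ∏ p ∈ T, (φ (x p.1) (x p.2) - pa) ∂(Measure.pi fun _ : Fin n => μ)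
      = ∑ U ∈ T.powerset, ∫ x : Fin n → Ω, (∏ p ∈ U, φ (x p.1) (x p.2)) * ∏ _p ∈ T \ U, -pa
          ∂(Measure.pi fun _ : Fin n => μ) := by
        simp_rw [sub_eq_add_neg, prod_add]
        exact integral_finsetSum _ hint
    _ = ∑ U ∈ T.powerset, (∏ _p ∈ U, pa) * ∏ _p ∈ T \ U, -pa := by
        refine sum_congr rfl fun U hU => ?_
        rw [integral_mul_const, integral_prod_arc_eq_pow hφm hφ h ((mem_powerset.1 hU).trans hT),
          prod_const, prod_const]
    _ = 0 := by
        rw [← prod_add, prod_const, add_neg_cancel, zero_pow hTne.card_pos.ne']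

end ArcMoments

section ProductCoordinates

variable {ι Ω : Type*} [Fintype ι] [MeasurableSpace Ω] {μ : Measure Ω} [IsProbabilityMeasure μ]

lemma iIndepFun_eval_pi : iIndepFun (fun (i : ι) (x : ι → Ω) => x i) (Measure.pi fun _ => μ) :=
  iIndepFun_pi (X := fun _ => id) fun _ => aemeasurable_id

lemma map_eval_pair_pi {i j : ι} (hij : i ≠ j) :
    (Measure.pi fun _ : ι => μ).map (fun x => (x i, x j)) = μ.prod μ := by
  rw [(iIndepFun_eval_pi.indepFun hij).map_prod_eq_prod_map_map
      (measurable_pi_apply i).aemeasurable (measurable_pi_apply j).aemeasurable,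
    (measurePreserving_eval _ i).map_eq, (measurePreserving_eval _ j).map_eq]

lemma map_eval_four_pi {a b c d : ι} (hab : a ≠ b) (hac : a ≠ c) (had : a ≠ d) (hbc : b ≠ c)
    (hbd : b ≠ d) (hcd : c ≠ d) :
    (Measure.pi fun _ : ι => μ).map (fun x => ((x a, x b), (x c, x d))) =
      (μ.prod μ).prod (μ.prod μ) := by
  rw [(iIndepFun_eval_pi.indepFun_prodMk_prodMk (fun i => measurable_pi_apply i) a b c d
      hac had hbc hbd).map_prod_eq_prod_map_map (by fun_prop) (by fun_prop),
    map_eval_pair_pi hab, map_eval_pair_pi hcd]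

end ProductCoordinates

lemma abs_mul_le_one {a b : ℝ} (ha : |a| ≤ 1) (hb : |b| ≤ 1) : |a * b| ≤ 1 := by
  rw [abs_mul]; exact mul_le_one₀ ha (abs_nonneg b) hb

lemma ae_eq_zero_of_integral_sq_eq_zero {α : Type*} [MeasurableSpace α] {ν : Measure α}
    {f : α → ℝ} (hf : MemLp f 2 ν) (h : ∫ x, f x ^ 2 ∂ν = 0) : f =ᵐ[ν] 0 := by
  filter_upwards [(integral_eq_zero_iff_of_nonneg (fun x => sq_nonneg (f x))
    hf.integrable_sq).1 h] with x hx
  exact pow_eq_zero_iff two_ne_zero |>.mp hx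

lemma ae_eq_zero_of_forall_setIntegral_prod_eq_zero {α β : Type*} [MeasurableSpace α]
    [MeasurableSpace β] {ν : Measure (α × β)} {f : α × β → ℝ} (hf : Integrable f ν)
    (h : ∀ ⦃s : Set α⦄, MeasurableSet s → ∀ ⦃t : Set β⦄, MeasurableSet t →
      ∫ z in s ×ˢ t, f z ∂ν = 0) :
    f =ᵐ[ν] 0 := by
  suffices ∀ E, MeasurableSet E → ∫ z in E, f z ∂ν = 0 from
    hf.ae_eq_zero_of_forall_setIntegral_eq_zero fun E hE _ => this E hE
  intro E hE
  induction E, hE using MeasurableSpace.induction_on_inter generateFrom_prod.symm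
    isPiSystem_prod with
  | empty => simp
  | basic _ hR =>
    obtain ⟨s, hs, t, ht, rfl⟩ := hR
    exact h hs ht
  | compl E hE ihE =>
    have huniv : ∫ z, f z ∂ν = 0 := by
      simpa [Set.univ_prod_univ] using h MeasurableSet.univ MeasurableSet.univ
    linarith [integral_add_compl hE hf]
  | iUnion E hdisj hE ihE =>
    rw [integral_iUnion hE hdisj hf.integrableOn]
    simp [ihE]

section Kernel

variable {Ω : Type*} [MeasurableSpace Ω] {μ : Measure Ω} [IsFiniteMeasure μ]
  {ψ : Ω → Ω → ℝ}

noncomputable def codegree (μ : Measure Ω) (ψ : Ω → Ω → ℝ) (q : Ω × Ω) : ℝ :=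
  ∫ t, ψ t q.1 * ψ t q.2 ∂μ

lemma memLp_codegree (hψm : Measurable (Function.uncurry ψ)) (hψb : ∀ x y, |ψ x y| ≤ 1) :
    MemLp (codegree μ ψ) 2 (μ.prod μ) := by
  refine MemLp.of_bound ?_ (1 * μ.real Set.univ) (ae_of_all _ fun q => ?_)
  · exact (Measurable.stronglyMeasurable (by fun_prop :
      Measurable fun r : (Ω × Ω) × Ω => ψ r.2 r.1.1 * ψ r.2 r.1.2)).integral_prod_right'
      |>.aestronglyMeasurable
  · exact norm_integral_le_of_norm_le_const
      (ae_of_all _ fun t => abs_mul_le_one (hψb _ _) (hψb _ _))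

lemma ae_setIntegral_eq_zero_of_codegree_ae_eq_zero (hψm : Measurable (Function.uncurry ψ))
    (hψb : ∀ x y, |ψ x y| ≤ 1) (hK : codegree μ ψ =ᵐ[μ.prod μ] 0) (B : Set Ω) :
    ∀ᵐ t ∂μ, ∫ u in B, ψ t u ∂μ = 0 := by
  have hmemLp : MemLp (fun t => ∫ u in B, ψ t u ∂μ) 2 μ := by
    refine MemLp.of_bound ?_ (1 * μ.real B) (ae_of_all _ fun t => ?_)
    · exact (hψm.stronglyMeasurable.integral_prod_right' (ν := μ.restrict B)).aestronglyMeasurable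
    · exact norm_setIntegral_le_of_norm_le_const (measure_lt_top μ B) fun u _ => hψb t u
  refine ae_eq_zero_of_integral_sq_eq_zero hmemLp ?_
  have hsq : ∀ t, (∫ u in B, ψ t u ∂μ) ^ 2 = ∫ q in B ×ˢ B, ψ t q.1 * ψ t q.2 ∂μ.prod μ := by
    intro t
    rw [setIntegral_prod_mul, sq]
  have hint : Integrable (Function.uncurry fun t (q : Ω × Ω) => ψ t q.1 * ψ t q.2)
      (μ.prod ((μ.prod μ).restrict (B ×ˢ B))) := by
    refine Integrable.of_bound (by fun_prop) 1 (ae_of_all _ fun r => ?_)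
    exact abs_mul_le_one (hψb _ _) (hψb _ _)
  calc ∫ t, (∫ u in B, ψ t u ∂μ) ^ 2 ∂μ
      = ∫ q in B ×ˢ B, codegree μ ψ q ∂μ.prod μ := by
        simp_rw [hsq]
        exact integral_integral_swap hint
    _ = 0 := integral_eq_zero_of_ae (ae_restrict_of_ae hK)

lemma ae_eq_zero_of_integral_codegree_sq_eq_zero (hψm : Measurable (Function.uncurry ψ))
    (hψb : ∀ x y, |ψ x y| ≤ 1) (h : ∫ q, codegree μ ψ q ^ 2 ∂(μ.prod μ) = 0) :
    Function.uncurry ψ =ᵐ[μ.prod μ] 0 := by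
  have hK := ae_eq_zero_of_integral_sq_eq_zero (memLp_codegree hψm hψb) h
  have hint : Integrable (Function.uncurry ψ) (μ.prod μ) :=
    Integrable.of_bound hψm.aestronglyMeasurable 1 (ae_of_all _ fun q => hψb q.1 q.2)
  refine ae_eq_zero_of_forall_setIntegral_prod_eq_zero hint fun A _ B _ => ?_
  rw [setIntegral_prod _ hint.integrableOn]
  exact integral_eq_zero_of_ae
    (ae_restrict_of_ae (ae_setIntegral_eq_zero_of_codegree_ae_eq_zero hψm hψb hK B))

end Kernel

section FourCycle

variable {Ω : Type*} [MeasurableSpace Ω] {μ : Measure Ω} {ψ : Ω → Ω → ℝ}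

lemma integral_fourCycle_eq_integral_codegree_sq [IsFiniteMeasure μ]
    (hψm : Measurable (Function.uncurry ψ)) (hψb : ∀ x y, |ψ x y| ≤ 1) :
    ∫ r, ψ r.2.1 r.1.1 * ψ r.2.1 r.1.2 * (ψ r.2.2 r.1.1 * ψ r.2.2 r.1.2)
        ∂((μ.prod μ).prod (μ.prod μ)) = ∫ q, codegree μ ψ q ^ 2 ∂(μ.prod μ) := by
  have hint : Integrable (fun r : (Ω × Ω) × (Ω × Ω) =>
      ψ r.2.1 r.1.1 * ψ r.2.1 r.1.2 * (ψ r.2.2 r.1.1 * ψ r.2.2 r.1.2))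
      ((μ.prod μ).prod (μ.prod μ)) :=
    Integrable.of_bound (by fun_prop) 1 (ae_of_all _ fun r => abs_mul_le_one
      (abs_mul_le_one (hψb _ _) (hψb _ _)) (abs_mul_le_one (hψb _ _) (hψb _ _)))
  rw [integral_prod _ hint]
  congr 1 with q
  rw [integral_prod_mul (fun t => ψ t q.1 * ψ t q.2) (fun t => ψ t q.1 * ψ t q.2), sq]
  rfl

lemma integral_pi_fourCycle_eq_integral_codegree_sq {ι : Type*} [Fintype ι]
    [IsProbabilityMeasure μ] (hψm : Measurable (Function.uncurry ψ)) (hψb : ∀ x y, |ψ x y| ≤ 1)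
    {a b c d : ι} (hab : a ≠ b) (hac : a ≠ c) (had : a ≠ d) (hbc : b ≠ c) (hbd : b ≠ d)
    (hcd : c ≠ d) :
    ∫ x, ψ (x c) (x a) * ψ (x c) (x b) * (ψ (x d) (x a) * ψ (x d) (x b))
        ∂(Measure.pi fun _ : ι => μ) = ∫ q, codegree μ ψ q ^ 2 ∂(μ.prod μ) := by
  have hF : Measurable fun r : (Ω × Ω) × (Ω × Ω) =>
      ψ r.2.1 r.1.1 * ψ r.2.1 r.1.2 * (ψ r.2.2 r.1.1 * ψ r.2.2 r.1.2) := by fun_prop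
  rw [← integral_fourCycle_eq_integral_codegree_sq hψm hψb,
    ← map_eval_four_pi hab hac had hbc hbd hcd,
    integral_map (by fun_prop) hF.aestronglyMeasurable]

end FourCycle

/-- For `n ≥ 4` and `0 < p_a < 1`, the arc random digraph `D(n, p_a)` is not a vertex random
digraph: no probability space `(Ω, μ)` and `{0,1}`-valued measurable `φ` represent it. -/
theorem stmt3 {n : ℕ} (hn : 4 ≤ n) {pa : ℝ} (hpa0 : 0 < pa) (hpa1 : pa < 1)
    (Ω : Type*) [MeasurableSpace Ω] (μ : Measure Ω) [IsProbabilityMeasure μ]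
    (φ : Ω → Ω → ℝ) (hmeas : Measurable (Function.uncurry φ))
    (h01 : ∀ x y, φ x y = 0 ∨ φ x y = 1) :
    ¬ ∀ A : Finset (Fin n × Fin n), IsDigraph A →
        pa ^ A.card * (1 - pa) ^ (n * (n - 1) - A.card) = vardP μ φ A := by
  intro h
  have hψm : Measurable (Function.uncurry fun x y => φ x y - pa) := by fun_prop
  have hψb : ∀ x y, |φ x y - pa| ≤ 1 := fun x y => by
    rcases h01 x y with hxy | hxy <;> rw [hxy, abs_le] <;> constructor <;> linarith
  have hv : Function.Injective (Fin.castLE hn) := Fin.castLE_injective hn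
  set a := Fin.castLE hn 0
  set b := Fin.castLE hn 1
  set c := Fin.castLE hn 2
  set d := Fin.castLE hn 3
  have hab : a ≠ b := hv.ne (by decide)
  have hac : a ≠ c := hv.ne (by decide)
  have had : a ≠ d := hv.ne (by decide)
  have hbc : b ≠ c := hv.ne (by decide)
  have hbd : b ≠ d := hv.ne (by decide)
  have hcd : c ≠ d := hv.ne (by decide)
  have hcycle : ∫ x : Fin n → Ω, (φ (x c) (x a) - pa) * (φ (x c) (x b) - pa) *
      ((φ (x d) (x a) - pa) * (φ (x d) (x b) - pa)) ∂(Measure.pi fun _ => μ) = 0 := by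
    simpa [prod_insert, hab, hcd, mul_assoc] using integral_prod_arc_sub_eq_zero hmeas h01 h
      (T := {(c, a), (c, b), (d, a), (d, b)})
      (by simp [insert_subset_iff, mem_offDiag, hac.symm, hbc.symm, had.symm, hbd.symm])
      (insert_nonempty _ _)
  rw [integral_pi_fourCycle_eq_integral_codegree_sq hψm hψb hab hac had hbc hbd hcd] at hcycle
  obtain ⟨⟨u, v⟩, huv⟩ := (ae_eq_zero_of_integral_codegree_sq_eq_zero hψm hψb hcycle).exists
  have hφuv : φ u v = pa := sub_eq_zero.1 huv
  rcases h01 u v with h0 | h1 <;> linarith
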